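/- There exists a constant C depending only on β⁻ and β⁺ (independent of d, e and h) such that for all 0 < h < 1, every interface configuration on K = [0,h]² of Type I (d, e ∈ [0,1], (d,e) ≠ (0,0)) or Type II (d, e ∈ [0,1]), every bilinear IFE function v on K, and every edge B of K with unit normal n_B: ∥β ∇v · n_B∥_{L²(B)} ≤ C h^{1/2} |K|^{-1/2} ∥√β ∇v∥_{L²(K)}. -/

import Mathlib

open MeasureTheory

/-- The closed square `K = [0,h] × [0,h]`. -/
def sqK (h : ℝ) : Set (ℝ × ℝ) := Set.Icc (0:ℝ) h ×ˢ Set.Icc (0:ℝ) h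

/-- `n` is a unit normal to the segment from `D` to `E`. -/
def unitNormalTo (n D E : ℝ × ℝ) : Prop :=
  n.1 ^ 2 + n.2 ^ 2 = 1 ∧ n.1 * (E.1 - D.1) + n.2 * (E.2 - D.2) = 0

/-- Jump conditions for bilinear IFE functions with pieces
`v⁻ = c₁⁻ + c₂⁻x + c₃⁻y + c₄xy`, `v⁺ = c₁⁺ + c₂⁺x + c₃⁺y + c₄xy`:
`v⁻(D) = v⁺(D)`, `v⁻(E) = v⁺(E)`, and `∫_{DE} β⁻∇v⁻·n̄ ds = ∫_{DE} β⁺∇v⁺·n̄ ds`,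
the segment `DE` being parametrized by `t ↦ D + t(E-D)`, `t ∈ [0,1]`, with arclength
element `ds = ‖E-D‖ dt`. -/
noncomputable def bilJump (βm βp c1m c2m c3m c1p c2p c3p c4 : ℝ) (D E n : ℝ × ℝ) : Prop :=
  c1m + c2m * D.1 + c3m * D.2 + c4 * D.1 * D.2
      = c1p + c2p * D.1 + c3p * D.2 + c4 * D.1 * D.2 ∧
  c1m + c2m * E.1 + c3m * E.2 + c4 * E.1 * E.2
      = c1p + c2p * E.1 + c3p * E.2 + c4 * E.1 * E.2 ∧
  Real.sqrt ((E.1 - D.1) ^ 2 + (E.2 - D.2) ^ 2) *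
      (∫ t in (0:ℝ)..1, βm * ((c2m + c4 * (D.2 + t * (E.2 - D.2))) * n.1 +
        (c3m + c4 * (D.1 + t * (E.1 - D.1))) * n.2))
    = Real.sqrt ((E.1 - D.1) ^ 2 + (E.2 - D.2) ^ 2) *
      (∫ t in (0:ℝ)..1, βp * ((c2p + c4 * (D.2 + t * (E.2 - D.2))) * n.1 +
        (c3p + c4 * (D.1 + t * (E.1 - D.1))) * n.2))

/-- `∥√β ∇v∥²_{L²(K)} = β⁻∫_{K⁻}|∇v⁻|² + β⁺∫_{K⁺}|∇v⁺|²` for the piecewise bilinear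
function with pieces `vˢ = c₁ˢ + c₂ˢx + c₃ˢy + c₄xy`, `∇vˢ = (c₂ˢ + c₄y, c₃ˢ + c₄x)`. -/
noncomputable def energySqBil (βm βp c2m c3m c2p c3p c4 : ℝ) (Km Kp : Set (ℝ × ℝ)) : ℝ :=
  βm * (∫ X in Km, ((c2m + c4 * X.2) ^ 2 + (c3m + c4 * X.1) ^ 2)) +
    βp * (∫ X in Kp, ((c2p + c4 * X.2) ^ 2 + (c3p + c4 * X.1) ^ 2))

/-- `∥β ∇v·n_B∥²_{L²(B)} = ∫_{B∩K⁻}(β⁻∇v⁻·n_B)² ds + ∫_{B∩K⁺}(β⁺∇v⁺·n_B)² ds`, where the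
segment `B` from `P` to `Q` is parametrized by `t ↦ P + t(Q-P)`, `t ∈ [0,1]`, `ds`
arclength, and `∇vˢ(x,y) = (c₂ˢ + c₄y, c₃ˢ + c₄x)`. -/
noncomputable def edgeSqBilN (βm βp c2m c3m c2p c3p c4 : ℝ) (Km Kp : Set (ℝ × ℝ))
    (P Q nB : ℝ × ℝ) : ℝ :=
  Real.sqrt ((Q.1 - P.1) ^ 2 + (Q.2 - P.2) ^ 2) *
    ((∫ t in {t : ℝ | t ∈ Set.Icc (0:ℝ) 1 ∧ P + t • (Q - P) ∈ Km},
        (βm * ((c2m + c4 * (P + t • (Q - P)).2) * nB.1 +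
               (c3m + c4 * (P + t • (Q - P)).1) * nB.2)) ^ 2) +
     (∫ t in {t : ℝ | t ∈ Set.Icc (0:ℝ) 1 ∧ P + t • (Q - P) ∈ Kp},
        (βp * ((c2p + c4 * (P + t • (Q - P)).2) * nB.1 +
               (c3p + c4 * (P + t • (Q - P)).1) * nB.2)) ^ 2))

/-!
On `K` the gradient of a bilinear piece satisfies `|∇v±|² ≤ 4 ℓ±` with
`ℓ± = (c₂±)² + (c₃±)² + (c₄ h)²`, so the edge integral is at most `4 h (β⁻² ℓ⁻ + β⁺² ℓ⁺)`.
The jump conditions say that at the midpoint of `DE` the gradients `∇v⁻`, `∇v⁺` have the same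
tangential component and `β⁻ ∇v⁻ · n̄ = β⁺ ∇v⁺ · n̄`; hence `β±² ℓ± ≲ (β⁻² + β⁺²) ℓ∓`, i.e. the
coefficients of either piece control those of the other. Finally one of `K⁻`, `K⁺` contains a
quarter `[x₀, x₀ + h/2] × [y₀, y₀ + h/2]` of `K`, on which `∫ |∇v|² ≥ h² ℓ / 384`; this bounds
`ℓ` of that piece, and hence the edge integral, by `C h⁻¹ ∥√β ∇v∥²`.
-/

open Set

def gradSq (c2 c3 c4 : ℝ) (X : ℝ × ℝ) : ℝ := (c2 + c4 * X.2) ^ 2 + (c3 + c4 * X.1) ^ 2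

def coeffSq (c2 c3 c4 h : ℝ) : ℝ := c2 ^ 2 + c3 ^ 2 + (c4 * h) ^ 2

lemma gradSq_nonneg (c2 c3 c4 : ℝ) (X : ℝ × ℝ) : 0 ≤ gradSq c2 c3 c4 X := by
  unfold gradSq; positivity

lemma sq_mul_le_sq_mul_of_mem_Icc (c : ℝ) {x h : ℝ} (hx : x ∈ Icc 0 h) :
    (c * x) ^ 2 ≤ (c * h) ^ 2 := by
  rw [mul_pow, mul_pow]
  exact mul_le_mul_of_nonneg_left (pow_le_pow_left₀ hx.1 hx.2 2) (sq_nonneg c)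

section Square

variable {c2 c3 c4 h : ℝ} {X : ℝ × ℝ}

lemma gradSq_le_four_mul_coeffSq (hX : X ∈ sqK h) :
    gradSq c2 c3 c4 X ≤ 4 * coeffSq c2 c3 c4 h := by
  have hx := sq_mul_le_sq_mul_of_mem_Icc c4 hX.1
  have hy := sq_mul_le_sq_mul_of_mem_Icc c4 hX.2
  unfold gradSq coeffSq
  nlinarith [sq_nonneg (c2 - c4 * X.2), sq_nonneg (c3 - c4 * X.1)]

lemma sq_add_sq_le_gradSq (hX : X ∈ sqK h) :
    c2 ^ 2 + c3 ^ 2 ≤ 2 * gradSq c2 c3 c4 X + 4 * (c4 * h) ^ 2 := by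
  have hx := sq_mul_le_sq_mul_of_mem_Icc c4 hX.1
  have hy := sq_mul_le_sq_mul_of_mem_Icc c4 hX.2
  unfold gradSq
  nlinarith [sq_nonneg (c2 + 2 * c4 * X.2), sq_nonneg (c3 + 2 * c4 * X.1)]

end Square

lemma sq_add_sq_eq_of_unit {n : ℝ × ℝ} (hn : n.1 ^ 2 + n.2 ^ 2 = 1) (a b : ℝ) :
    a ^ 2 + b ^ 2 = (a * n.1 + b * n.2) ^ 2 + (a * n.2 - b * n.1) ^ 2 := by
  linear_combination (-(a ^ 2 + b ^ 2)) * hn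

lemma flux_sq_le {n : ℝ × ℝ} (hn : n.1 ^ 2 + n.2 ^ 2 = 1) (β a b : ℝ) :
    (β * (a * n.1 + b * n.2)) ^ 2 ≤ β ^ 2 * (a ^ 2 + b ^ 2) := by
  rw [mul_pow, sq_add_sq_eq_of_unit hn a b]
  exact mul_le_mul_of_nonneg_left (le_add_of_nonneg_right (sq_nonneg _)) (sq_nonneg β)

lemma sq_mul_sq_add_sq_le_of_transmission {βm βp : ℝ} {u w n D E : ℝ × ℝ}
    (hn : unitNormalTo n D E) (hDE : D ≠ E)
    (htan : (u.1 - w.1) * (E.1 - D.1) + (u.2 - w.2) * (E.2 - D.2) = 0)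
    (hflux : βm * (u.1 * n.1 + u.2 * n.2) = βp * (w.1 * n.1 + w.2 * n.2)) :
    βm ^ 2 * (u.1 ^ 2 + u.2 ^ 2) ≤ (βm ^ 2 + βp ^ 2) * (w.1 ^ 2 + w.2 ^ 2) := by
  obtain ⟨hunit, horth⟩ := hn
  have ht1 : E.1 - D.1 = -(n.1 * (E.2 - D.2) - n.2 * (E.1 - D.1)) * n.2 := by
    linear_combination (-(E.1 - D.1)) * hunit + n.1 * horth
  have ht2 : E.2 - D.2 = (n.1 * (E.2 - D.2) - n.2 * (E.1 - D.1)) * n.1 := by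
    linear_combination (-(E.2 - D.2)) * hunit + n.2 * horth
  have hl : n.1 * (E.2 - D.2) - n.2 * (E.1 - D.1) ≠ 0 := by
    intro h0
    rw [h0] at ht1 ht2
    exact hDE (Prod.ext (by linarith) (by linarith))
  have hrot : u.1 * n.2 - u.2 * n.1 = w.1 * n.2 - w.2 * n.1 := by
    refine mul_left_cancel₀ hl ?_
    linear_combination -htan + (u.1 - w.1) * ht1 + (u.2 - w.2) * ht2
  calc βm ^ 2 * (u.1 ^ 2 + u.2 ^ 2)
      = (βm * (u.1 * n.1 + u.2 * n.2)) ^ 2 + βm ^ 2 * (u.1 * n.2 - u.2 * n.1) ^ 2 := by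
        rw [sq_add_sq_eq_of_unit hunit u.1 u.2]; ring
    _ = (βp * (w.1 * n.1 + w.2 * n.2)) ^ 2 + βm ^ 2 * (w.1 * n.2 - w.2 * n.1) ^ 2 := by
        rw [hflux, hrot]
    _ ≤ (βm ^ 2 + βp ^ 2) * ((w.1 * n.1 + w.2 * n.2) ^ 2 + (w.1 * n.2 - w.2 * n.1) ^ 2) := by
        nlinarith [mul_nonneg (sq_nonneg βm) (sq_nonneg (w.1 * n.1 + w.2 * n.2)),
          mul_nonneg (sq_nonneg βp) (sq_nonneg (w.1 * n.2 - w.2 * n.1))]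
    _ = (βm ^ 2 + βp ^ 2) * (w.1 ^ 2 + w.2 ^ 2) := by rw [← sq_add_sq_eq_of_unit hunit]

lemma integral_affine_unitInterval (A B : ℝ) : ∫ t in (0:ℝ)..1, (A + B * t) = A + B / 2 := by
  rw [intervalIntegral.integral_add, intervalIntegral.integral_const_mul B (fun t => t),
    integral_id]
  · norm_num [div_eq_mul_inv]
  all_goals exact Continuous.intervalIntegrable (by fun_prop) _ _

lemma integral_flux_eq_midpoint (β c2 c3 c4 : ℝ) (D E n : ℝ × ℝ) :
    ∫ t in (0:ℝ)..1, β * ((c2 + c4 * (D.2 + t * (E.2 - D.2))) * n.1 +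
        (c3 + c4 * (D.1 + t * (E.1 - D.1))) * n.2)
      = β * ((c2 + c4 * ((D.2 + E.2) / 2)) * n.1 + (c3 + c4 * ((D.1 + E.1) / 2)) * n.2) := by
  have haffine : (fun t : ℝ => β * ((c2 + c4 * (D.2 + t * (E.2 - D.2))) * n.1 +
        (c3 + c4 * (D.1 + t * (E.1 - D.1))) * n.2))
      = fun t => β * ((c2 + c4 * D.2) * n.1 + (c3 + c4 * D.1) * n.2)
          + β * c4 * ((E.2 - D.2) * n.1 + (E.1 - D.1) * n.2) * t := by
    ext t; ring
  rw [haffine, integral_affine_unitInterval]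
  ring

namespace bilJump

variable {βm βp c1m c2m c3m c1p c2p c3p c4 : ℝ} {D E n : ℝ × ℝ}

lemma symm (hj : bilJump βm βp c1m c2m c3m c1p c2p c3p c4 D E n) :
    bilJump βp βm c1p c2p c3p c1m c2m c3m c4 D E n :=
  ⟨hj.1.symm, hj.2.1.symm, hj.2.2.symm⟩

/-- The jump conditions are the transmission conditions for the gradients at the midpoint of
`DE`: `v⁻ - v⁺` is affine and vanishes at `D` and `E`, and the flux integrands are affine. -/
lemma sq_mul_gradSq_midpoint_le (hj : bilJump βm βp c1m c2m c3m c1p c2p c3p c4 D E n)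
    (hn : unitNormalTo n D E) (hDE : D ≠ E) :
    βm ^ 2 * gradSq c2m c3m c4 ((D.1 + E.1) / 2, (D.2 + E.2) / 2)
      ≤ (βm ^ 2 + βp ^ 2) * gradSq c2p c3p c4 ((D.1 + E.1) / 2, (D.2 + E.2) / 2) := by
  obtain ⟨hjD, hjE, hjflux⟩ := hj
  have hlen : 0 < √((E.1 - D.1) ^ 2 + (E.2 - D.2) ^ 2) := by
    refine Real.sqrt_pos.2 (lt_of_le_of_ne (by positivity) fun h0 => hDE ?_)
    exact Prod.ext (by nlinarith [sq_nonneg (E.1 - D.1), sq_nonneg (E.2 - D.2)])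
      (by nlinarith [sq_nonneg (E.1 - D.1), sq_nonneg (E.2 - D.2)])
  rw [integral_flux_eq_midpoint, integral_flux_eq_midpoint] at hjflux
  exact sq_mul_sq_add_sq_le_of_transmission
    (u := (c2m + c4 * ((D.2 + E.2) / 2), c3m + c4 * ((D.1 + E.1) / 2)))
    (w := (c2p + c4 * ((D.2 + E.2) / 2), c3p + c4 * ((D.1 + E.1) / 2)))
    hn hDE (by linear_combination hjE - hjD) (mul_left_cancel₀ hlen.ne' hjflux)

lemma sq_mul_coeffSq_le {h : ℝ} (hj : bilJump βm βp c1m c2m c3m c1p c2p c3p c4 D E n)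
    (hn : unitNormalTo n D E) (hDE : D ≠ E) (hD : D ∈ sqK h) (hE : E ∈ sqK h) :
    βm ^ 2 * coeffSq c2m c3m c4 h ≤ 13 * (βm ^ 2 + βp ^ 2) * coeffSq c2p c3p c4 h := by
  have hM : ((D.1 + E.1) / 2, (D.2 + E.2) / 2) ∈ sqK h :=
    ⟨⟨by linarith [hD.1.1, hE.1.1], by linarith [hD.1.2, hE.1.2]⟩,
      ⟨by linarith [hD.2.1, hE.2.1], by linarith [hD.2.2, hE.2.2]⟩⟩
  have hm := sq_add_sq_le_gradSq (c2 := c2m) (c3 := c3m) (c4 := c4) hM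
  have hp := gradSq_le_four_mul_coeffSq (c2 := c2p) (c3 := c3p) (c4 := c4) hM
  have hmp := hj.sq_mul_gradSq_midpoint_le hn hDE
  have hg : (c4 * h) ^ 2 ≤ coeffSq c2p c3p c4 h := by
    unfold coeffSq; nlinarith [sq_nonneg c2p, sq_nonneg c3p]
  unfold coeffSq at *
  nlinarith [mul_le_mul_of_nonneg_left hm (sq_nonneg βm),
    mul_le_mul_of_nonneg_left hp (add_nonneg (sq_nonneg βm) (sq_nonneg βp)),
    mul_le_mul_of_nonneg_left hg (sq_nonneg βm)]

end bilJump

lemma setIntegral_flux_sq_le (β c2 c3 c4 : ℝ) {h : ℝ} (K : Set (ℝ × ℝ)) {P Q nB : ℝ × ℝ}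
    (hP : P ∈ sqK h) (hQ : Q ∈ sqK h) (hnB : nB.1 ^ 2 + nB.2 ^ 2 = 1) :
    ∫ t in {t : ℝ | t ∈ Icc (0:ℝ) 1 ∧ P + t • (Q - P) ∈ K},
        (β * ((c2 + c4 * (P + t • (Q - P)).2) * nB.1 +
               (c3 + c4 * (P + t • (Q - P)).1) * nB.2)) ^ 2
      ≤ 4 * β ^ 2 * coeffSq c2 c3 c4 h := by
  have hconv : Convex ℝ (sqK h) := (convex_Icc 0 h).prod (convex_Icc 0 h)
  have hpt : ∀ t ∈ Icc (0:ℝ) 1, (β * ((c2 + c4 * (P + t • (Q - P)).2) * nB.1 +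
      (c3 + c4 * (P + t • (Q - P)).1) * nB.2)) ^ 2 ≤ 4 * β ^ 2 * coeffSq c2 c3 c4 h := by
    intro t ht
    calc _ ≤ β ^ 2 * gradSq c2 c3 c4 (P + t • (Q - P)) := flux_sq_le hnB β _ _
      _ ≤ β ^ 2 * (4 * coeffSq c2 c3 c4 h) := mul_le_mul_of_nonneg_left
          (gradSq_le_four_mul_coeffSq (hconv.add_smul_sub_mem hP hQ ht)) (sq_nonneg β)
      _ = 4 * β ^ 2 * coeffSq c2 c3 c4 h := by ring
  calc _ ≤ ∫ t in Icc (0:ℝ) 1, (β * ((c2 + c4 * (P + t • (Q - P)).2) * nB.1 +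
          (c3 + c4 * (P + t • (Q - P)).1) * nB.2)) ^ 2 :=
        setIntegral_mono_set (Continuous.integrableOn_Icc (by fun_prop))
          (ae_of_all _ fun _ => sq_nonneg _)
          (ae_of_all _ fun _ ht => ht.1)
    _ ≤ ∫ _ in Icc (0:ℝ) 1, 4 * β ^ 2 * coeffSq c2 c3 c4 h :=
        setIntegral_mono_on (Continuous.integrableOn_Icc (by fun_prop))
          (integrableOn_const (by simp)) measurableSet_Icc hpt
    _ = 4 * β ^ 2 * coeffSq c2 c3 c4 h := by simp

lemma edgeSqBilN_le (βm βp c2m c3m c2p c3p c4 : ℝ) (Km Kp : Set (ℝ × ℝ)) {h : ℝ}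
    {P Q nB : ℝ × ℝ} (hP : P ∈ sqK h) (hQ : Q ∈ sqK h)
    (hlen : √((Q.1 - P.1) ^ 2 + (Q.2 - P.2) ^ 2) = h) (hnB : nB.1 ^ 2 + nB.2 ^ 2 = 1) :
    edgeSqBilN βm βp c2m c3m c2p c3p c4 Km Kp P Q nB
      ≤ 4 * h * (βm ^ 2 * coeffSq c2m c3m c4 h + βp ^ 2 * coeffSq c2p c3p c4 h) := by
  have hh : 0 ≤ h := hlen ▸ Real.sqrt_nonneg _
  unfold edgeSqBilN
  rw [hlen]
  calc _ ≤ h * (4 * βm ^ 2 * coeffSq c2m c3m c4 h + 4 * βp ^ 2 * coeffSq c2p c3p c4 h) :=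
        mul_le_mul_of_nonneg_left (add_le_add
          (setIntegral_flux_sq_le βm c2m c3m c4 Km hP hQ hnB)
          (setIntegral_flux_sq_le βp c2p c3p c4 Kp hP hQ hnB)) hh
    _ = _ := by ring

lemma intervalIntegral_sq_affine (c k a b : ℝ) :
    ∫ y in a..b, (c + k * y) ^ 2
      = c ^ 2 * (b - a) + c * k * (b ^ 2 - a ^ 2) + k ^ 2 * (b ^ 3 - a ^ 3) / 3 := by
  have hderiv (y : ℝ) : HasDerivAt (fun y => c ^ 2 * y + c * k * y ^ 2 + k ^ 2 * y ^ 3 / 3)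
      ((c + k * y) ^ 2) y := by
    refine ((((hasDerivAt_id' y).const_mul (c ^ 2)).fun_add
      ((hasDerivAt_pow 2 y).const_mul (c * k))).fun_add
      (((hasDerivAt_pow 3 y).const_mul (k ^ 2)).div_const 3)).congr_deriv ?_
    norm_num
    ring
  rw [intervalIntegral.integral_eq_sub_of_hasDerivAt (fun y _ => hderiv y)
    (Continuous.intervalIntegrable (by fun_prop) _ _)]
  ring

/-- Substituting `y = a + s u`, the integral is `s (α² + αγ + γ²/3)` with `α = c + k a`,
`γ = k s`; this form dominates `(α² + γ²)/16`, and `c² + (2ks)² ≤ 6 (α² + γ²)` as `a ≤ s`. -/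
lemma mul_sq_le_intervalIntegral_sq_affine (c k : ℝ) {a s : ℝ} (ha : a ∈ Icc 0 s) :
    s * (c ^ 2 + (k * (2 * s)) ^ 2) ≤ 96 * ∫ y in a..a + s, (c + k * y) ^ 2 := by
  rw [intervalIntegral_sq_affine]
  have hs : 0 ≤ s := ha.1.trans ha.2
  have hka := sq_mul_le_sq_mul_of_mem_Icc k ha
  have hform : c ^ 2 + (k * (2 * s)) ^ 2
      ≤ 96 * ((c + k * a) ^ 2 + (c + k * a) * (k * s) + (k * s) ^ 2 / 3) := by
    nlinarith [sq_nonneg (c + 2 * k * a), sq_nonneg (12 * (c + k * a) + 8 * (k * s))]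
  calc _ ≤ s * (96 * ((c + k * a) ^ 2 + (c + k * a) * (k * s) + (k * s) ^ 2 / 3)) :=
        mul_le_mul_of_nonneg_left hform hs
    _ = _ := by ring

lemma setIntegral_Icc_prod_Icc_gradSq (c2 c3 c4 x0 y0 : ℝ) {s : ℝ} (hs : 0 ≤ s) :
    ∫ X in Icc x0 (x0 + s) ×ˢ Icc y0 (y0 + s), gradSq c2 c3 c4 X
      = s * (∫ y in y0..y0 + s, (c2 + c4 * y) ^ 2)
        + s * ∫ x in x0..x0 + s, (c3 + c4 * x) ^ 2 := by
  have hint (g : ℝ × ℝ → ℝ) (hg : Continuous g) :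
      IntegrableOn g (Icc x0 (x0 + s) ×ˢ Icc y0 (y0 + s)) :=
    hg.continuousOn.integrableOn_compact (isCompact_Icc.prod isCompact_Icc)
  have hIcc (a : ℝ) (g : ℝ → ℝ) : ∫ y in Icc a (a + s), g y = ∫ y in a..a + s, g y := by
    rw [integral_Icc_eq_integral_Ioc, intervalIntegral.integral_of_le (by linarith)]
  have hy := setIntegral_prod_mul (μ := volume) (ν := volume) (fun _ : ℝ => (1 : ℝ))
    (fun y => (c2 + c4 * y) ^ 2) (Icc x0 (x0 + s)) (Icc y0 (y0 + s))
  have hx := setIntegral_prod_mul (μ := volume) (ν := volume) (fun x => (c3 + c4 * x) ^ 2)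
    (fun _ : ℝ => (1 : ℝ)) (Icc x0 (x0 + s)) (Icc y0 (y0 + s))
  simp only [one_mul, mul_one, ← Measure.volume_eq_prod, hIcc] at hy hx
  unfold gradSq
  rw [integral_add (hint _ (by fun_prop)) (hint _ (by fun_prop)), hy, hx]
  simp only [intervalIntegral.integral_const, add_sub_cancel_left, smul_eq_mul, mul_one,
    add_right_inj]
  ring

def ContainsQuarterSquare (h : ℝ) (K : Set (ℝ × ℝ)) : Prop :=
  ∃ x0 ∈ Icc 0 (h / 2), ∃ y0 ∈ Icc 0 (h / 2), Icc x0 (x0 + h / 2) ×ˢ Icc y0 (y0 + h / 2) ⊆ K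

lemma integral_gradSq_ge_of_containsQuarterSquare (c2 c3 c4 : ℝ) {h : ℝ} {K : Set (ℝ × ℝ)}
    (hK : K ⊆ sqK h) (hQ : ContainsQuarterSquare h K) :
    h ^ 2 * coeffSq c2 c3 c4 h ≤ 384 * ∫ X in K, gradSq c2 c3 c4 X := by
  obtain ⟨x0, hx0, y0, hy0, hsub⟩ := hQ
  have hs : 0 ≤ h / 2 := hx0.1.trans hx0.2
  have hint : IntegrableOn (gradSq c2 c3 c4) K :=
    ((Continuous.continuousOn (by unfold gradSq; fun_prop)).integrableOn_compact
      (isCompact_Icc.prod isCompact_Icc)).mono_set hK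
  have hmono := setIntegral_mono_set hint (ae_of_all _ (gradSq_nonneg c2 c3 c4))
    hsub.eventuallyLE
  have hy := mul_sq_le_intervalIntegral_sq_affine c2 c4 hy0
  have hx := mul_sq_le_intervalIntegral_sq_affine c3 c4 hx0
  rw [setIntegral_Icc_prod_Icc_gradSq c2 c3 c4 x0 y0 hs] at hmono
  unfold coeffSq
  nlinarith [mul_le_mul_of_nonneg_left hy hs, mul_le_mul_of_nonneg_left hx hs,
    sq_nonneg (c4 * (2 * (h / 2)))]

lemma containsQuarterSquare_sep {h x0 y0 : ℝ} {p : ℝ × ℝ → Prop} (hx0 : x0 ∈ Icc 0 (h / 2))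
    (hy0 : y0 ∈ Icc 0 (h / 2))
    (hp : ∀ x ∈ Icc x0 (x0 + h / 2), ∀ y ∈ Icc y0 (y0 + h / 2), p (x, y)) :
    ContainsQuarterSquare h {X ∈ sqK h | p X} := by
  refine ⟨x0, hx0, y0, hy0, ?_⟩
  rintro ⟨x, y⟩ ⟨hx, hy⟩
  exact ⟨⟨⟨by linarith [hx0.1, hx.1], by linarith [hx0.2, hx.2]⟩,
    ⟨by linarith [hy0.1, hy.1], by linarith [hy0.2, hy.2]⟩⟩, hp x hx y hy⟩

structure InterfaceSplit (h : ℝ) (D E : ℝ × ℝ) (Km Kp : Set (ℝ × ℝ)) : Prop where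
  ne : D ≠ E
  left_mem : D ∈ sqK h
  right_mem : E ∈ sqK h
  minus_subset : Km ⊆ sqK h
  plus_subset : Kp ⊆ sqK h
  quarter : ContainsQuarterSquare h Km ∨ ContainsQuarterSquare h Kp

section Configurations

variable {h d e : ℝ}

lemma interfaceSplit_typeI (hh : 0 < h) (hd : d ∈ Icc (0:ℝ) 1) (he : e ∈ Icc (0:ℝ) 1)
    (hde : (d, e) ≠ (0, 0)) :
    InterfaceSplit h (0, d * h) (e * h, 0) {X ∈ sqK h | d * X.1 + e * X.2 ≤ d * e * h}
      {X ∈ sqK h | d * e * h ≤ d * X.1 + e * X.2} where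
  ne hDE := hde <| Prod.ext (mul_right_cancel₀ hh.ne' (by simpa using congrArg Prod.snd hDE))
    (mul_right_cancel₀ hh.ne' (by simpa using (congrArg Prod.fst hDE).symm))
  left_mem := ⟨⟨le_rfl, hh.le⟩, ⟨by nlinarith [hd.1], by nlinarith [hd.2]⟩⟩
  right_mem := ⟨⟨by nlinarith [he.1], by nlinarith [he.2]⟩, ⟨le_rfl, hh.le⟩⟩
  minus_subset := sep_subset _ _
  plus_subset := sep_subset _ _
  quarter := Or.inr <| containsQuarterSquare_sep (x0 := h / 2) (y0 := h / 2)
    ⟨by linarith, le_rfl⟩ ⟨by linarith, le_rfl⟩ fun x hx y hy => by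
      nlinarith [mul_nonneg hd.1 (sub_nonneg.2 hx.1), mul_nonneg he.1 (sub_nonneg.2 hy.1),
        mul_nonneg (mul_nonneg hd.1 (sub_nonneg.2 he.2)) hh.le,
        mul_nonneg (mul_nonneg he.1 (sub_nonneg.2 hd.2)) hh.le]

/-- The line `x = e h + (d - e) y` passes through `((d + e) h / 2, h / 2)`, so a quarter of the
square lies on the side of the larger part. -/
lemma interfaceSplit_typeII (hh : 0 < h) (hd : d ∈ Icc (0:ℝ) 1) (he : e ∈ Icc (0:ℝ) 1) :
    InterfaceSplit h (d * h, h) (e * h, 0) {X ∈ sqK h | X.1 ≤ e * h + (d - e) * X.2}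
      {X ∈ sqK h | e * h + (d - e) * X.2 ≤ X.1} where
  ne hDE := hh.ne' (congrArg Prod.snd hDE)
  left_mem := ⟨⟨by nlinarith [hd.1], by nlinarith [hd.2]⟩, ⟨hh.le, le_rfl⟩⟩
  right_mem := ⟨⟨by nlinarith [he.1], by nlinarith [he.2]⟩, ⟨le_rfl, hh.le⟩⟩
  minus_subset := sep_subset _ _
  plus_subset := sep_subset _ _
  quarter := by
    have h0 : (0:ℝ) ∈ Icc 0 (h / 2) := ⟨le_rfl, by linarith⟩
    have hhalf : h / 2 ∈ Icc 0 (h / 2) := ⟨by linarith, le_rfl⟩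
    rcases le_total 1 (d + e) with hsum | hsum <;> rcases le_total d e with hde | hde
    · exact Or.inl <| containsQuarterSquare_sep h0 h0 fun x hx y hy => by
        dsimp only
        nlinarith [mul_nonneg (sub_nonneg.2 hde) (by linarith [hy.2] : 0 ≤ h / 2 - y),
          mul_nonneg (sub_nonneg.2 hsum) hh.le, hx.2]
    · exact Or.inl <| containsQuarterSquare_sep h0 hhalf fun x hx y hy => by
        dsimp only
        nlinarith [mul_nonneg (sub_nonneg.2 hde) (sub_nonneg.2 hy.1),
          mul_nonneg (sub_nonneg.2 hsum) hh.le, hx.2]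
    · exact Or.inr <| containsQuarterSquare_sep hhalf hhalf fun x hx y hy => by
        dsimp only
        nlinarith [mul_nonneg (sub_nonneg.2 hde) (sub_nonneg.2 hy.1),
          mul_nonneg (sub_nonneg.2 hsum) hh.le, hx.1]
    · exact Or.inr <| containsQuarterSquare_sep hhalf h0 fun x hx y hy => by
        dsimp only
        nlinarith [mul_nonneg (sub_nonneg.2 hde) (by linarith [hy.2] : 0 ≤ h / 2 - y),
          mul_nonneg (sub_nonneg.2 hsum) hh.le, hx.1]

end Configurations

/-- `21504 = 4 · (1 + 13) · 384`, from the edge bound, the transfer of coefficients across the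
interface and the quarter-square bound. -/
noncomputable def traceConst (βm βp : ℝ) : ℝ := 21504 * (βm ^ 2 + βp ^ 2) * (βm⁻¹ + βp⁻¹)

lemma traceConst_pos {βm βp : ℝ} (hβm : 0 < βm) (hβp : 0 < βp) : 0 < traceConst βm βp := by
  unfold traceConst; positivity

lemma traceConst_comm (βm βp : ℝ) : traceConst βm βp = traceConst βp βm := by
  unfold traceConst; ring

/-- `b` indexes the side containing a quarter of the square, `s` the other side. -/
lemma le_traceConst_mul {βb βs h lb ls edge energy : ℝ} (hβb : 0 < βb) (hβs : 0 < βs)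
    (hh : 0 < h) (hlb : 0 ≤ lb) (hedge : edge ≤ 4 * h * (βb ^ 2 * lb + βs ^ 2 * ls))
    (hcoeff : βs ^ 2 * ls ≤ 13 * (βs ^ 2 + βb ^ 2) * lb)
    (henergy : βb * (h ^ 2 * lb) ≤ 384 * energy) :
    edge ≤ traceConst βb βs * h⁻¹ * energy := by
  set B := βb ^ 2 + βs ^ 2
  have hB : βb ^ 2 ≤ B := le_add_of_nonneg_right (sq_nonneg βs)
  have hE : 0 ≤ energy := by nlinarith [mul_nonneg hβb.le (mul_nonneg (sq_nonneg h) hlb)]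
  calc edge ≤ 56 * B * (h * lb) := by nlinarith [mul_nonneg hh.le hlb]
    _ ≤ 56 * B * (384 * energy / (βb * h)) := by
        gcongr
        rw [le_div_iff₀ (by positivity)]
        linarith
    _ = 21504 * B * βb⁻¹ * h⁻¹ * energy := by field_simp; ring
    _ ≤ traceConst βb βs * h⁻¹ * energy := by
        unfold traceConst
        gcongr
        exact le_add_of_nonneg_right (inv_nonneg.2 hβs.le)

lemma edgeSqBilN_le_traceConst_mul {βm βp c1m c2m c3m c1p c2p c3p c4 h : ℝ}
    {D E n P Q nB : ℝ × ℝ} {Km Kp : Set (ℝ × ℝ)} (hβm : 0 < βm) (hβp : 0 < βp) (hh : 0 < h)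
    (hsplit : InterfaceSplit h D E Km Kp) (hn : unitNormalTo n D E)
    (hj : bilJump βm βp c1m c2m c3m c1p c2p c3p c4 D E n)
    (hP : P ∈ sqK h) (hQ : Q ∈ sqK h) (hlen : √((Q.1 - P.1) ^ 2 + (Q.2 - P.2) ^ 2) = h)
    (hnB : nB.1 ^ 2 + nB.2 ^ 2 = 1) :
    edgeSqBilN βm βp c2m c3m c2p c3p c4 Km Kp P Q nB
      ≤ traceConst βm βp * h⁻¹ * energySqBil βm βp c2m c3m c2p c3p c4 Km Kp := by
  have hedge := edgeSqBilN_le βm βp c2m c3m c2p c3p c4 Km Kp hP hQ hlen hnB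
  have hmp := hj.sq_mul_coeffSq_le hn hsplit.ne hsplit.left_mem hsplit.right_mem
  have hpm := hj.symm.sq_mul_coeffSq_le hn hsplit.ne hsplit.left_mem hsplit.right_mem
  have hJm : 0 ≤ ∫ X in Km, gradSq c2m c3m c4 X := integral_nonneg (gradSq_nonneg _ _ _)
  have hJp : 0 ≤ ∫ X in Kp, gradSq c2p c3p c4 X := integral_nonneg (gradSq_nonneg _ _ _)
  have hlm : 0 ≤ coeffSq c2m c3m c4 h := by unfold coeffSq; positivity
  have hlp : 0 ≤ coeffSq c2p c3p c4 h := by unfold coeffSq; positivity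
  change _ ≤ _ * (βm * (∫ X in Km, gradSq c2m c3m c4 X) + βp * ∫ X in Kp, gradSq c2p c3p c4 X)
  rcases hsplit.quarter with hquarter | hquarter
  · have hen := integral_gradSq_ge_of_containsQuarterSquare c2m c3m c4
      hsplit.minus_subset hquarter
    refine le_traceConst_mul hβm hβp hh hlm hedge hpm ?_
    nlinarith [mul_le_mul_of_nonneg_left hen hβm.le, mul_nonneg hβp.le hJp]
  · have hen := integral_gradSq_ge_of_containsQuarterSquare c2p c3p c4
      hsplit.plus_subset hquarter
    rw [traceConst_comm]
    refine le_traceConst_mul hβp hβm hh hlp (hedge.trans_eq (by ring)) hmp ?_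
    nlinarith [mul_le_mul_of_nonneg_left hen hβp.le, mul_nonneg hβm.le hJm]

lemma sqrt_le_of_le_mul_inv {x C h E : ℝ} (hh : 0 < h) (hC : 0 ≤ C) (hx : x ≤ C * h⁻¹ * E) :
    √x ≤ √C * √h * (√(h ^ 2))⁻¹ * √E := by
  have hsqrt : √h * (√(h ^ 2))⁻¹ = √(h⁻¹) := by
    rw [Real.sqrt_sq hh.le, Real.sqrt_inv]
    nth_rewrite 2 [← Real.mul_self_sqrt hh.le]
    field_simp
  calc √x ≤ √(C * h⁻¹ * E) := Real.sqrt_le_sqrt hx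
    _ = √C * √h * (√(h ^ 2))⁻¹ * √E := by
        rw [mul_assoc √C, hsqrt, Real.sqrt_mul (by positivity), Real.sqrt_mul hC]

lemma edge_endpoints {h : ℝ} (hh : 0 < h) {P Q : ℝ × ℝ}
    (hPQ : (P = ((0:ℝ), (0:ℝ)) ∧ Q = ((0:ℝ), h)) ∨ (P = ((h:ℝ), (0:ℝ)) ∧ Q = (h, h)) ∨
      (P = ((0:ℝ), (0:ℝ)) ∧ Q = (h, (0:ℝ))) ∨ (P = ((0:ℝ), h) ∧ Q = (h, h))) :
    P ∈ sqK h ∧ Q ∈ sqK h ∧ √((Q.1 - P.1) ^ 2 + (Q.2 - P.2) ^ 2) = h := by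
  rcases hPQ with ⟨rfl, rfl⟩ | ⟨rfl, rfl⟩ | ⟨rfl, rfl⟩ | ⟨rfl, rfl⟩ <;>
    simp [sqK, hh.le, Real.sqrt_sq hh.le]

/-- trace inequality
`∥β ∇v·n_B∥_{L²(B)} ≤ C h^{1/2}|K|^{-1/2}∥√β ∇v∥_{L²(K)}` for bilinear IFE functions on
`K = [0,h]²`, for interface configurations of Type I or Type II and every edge `B` of `K`
with unit normal `n_B`, with `C` depending only on `β⁻, β⁺`. -/
theorem stmt11 (βm βp : ℝ) (hβm : 0 < βm) (hβp : 0 < βp) :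
    ∃ C : ℝ, 0 < C ∧
      ∀ h d e c1m c2m c3m c1p c2p c3p c4 : ℝ, ∀ D E : ℝ × ℝ, ∀ Km Kp : Set (ℝ × ℝ),
        0 < h → h < 1 →
        d ∈ Set.Icc (0:ℝ) 1 → e ∈ Set.Icc (0:ℝ) 1 →
        ((D = ((0:ℝ), d * h) ∧ E = (e * h, (0:ℝ)) ∧ (d, e) ≠ (0, 0) ∧
            Km = {X ∈ sqK h | d * X.1 + e * X.2 ≤ d * e * h} ∧
            Kp = {X ∈ sqK h | d * e * h ≤ d * X.1 + e * X.2}) ∨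
         (D = (d * h, h) ∧ E = (e * h, (0:ℝ)) ∧
            Km = {X ∈ sqK h | X.1 ≤ e * h + (d - e) * X.2} ∧
            Kp = {X ∈ sqK h | e * h + (d - e) * X.2 ≤ X.1})) →
        (∃ n : ℝ × ℝ, unitNormalTo n D E ∧
            bilJump βm βp c1m c2m c3m c1p c2p c3p c4 D E n) →
        ∀ P Q nB : ℝ × ℝ,
          ((P = ((0:ℝ), (0:ℝ)) ∧ Q = ((0:ℝ), h)) ∨
           (P = ((h:ℝ), (0:ℝ)) ∧ Q = (h, h)) ∨
           (P = ((0:ℝ), (0:ℝ)) ∧ Q = (h, (0:ℝ))) ∨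
           (P = ((0:ℝ), h) ∧ Q = (h, h))) →
          nB.1 ^ 2 + nB.2 ^ 2 = 1 →
          nB.1 * (Q.1 - P.1) + nB.2 * (Q.2 - P.2) = 0 →
          Real.sqrt (edgeSqBilN βm βp c2m c3m c2p c3p c4 Km Kp P Q nB)
              ≤ C * Real.sqrt h * (Real.sqrt (h ^ 2))⁻¹ *
                Real.sqrt (energySqBil βm βp c2m c3m c2p c3p c4 Km Kp) := by
  refine ⟨√(traceConst βm βp), Real.sqrt_pos.2 (traceConst_pos hβm hβp), ?_⟩
  intro h d e c1m c2m c3m c1p c2p c3p c4 D E Km Kp hh _ hd he hcfg hjump P Q nB hPQ hnB _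
  obtain ⟨n, hn, hj⟩ := hjump
  obtain ⟨hP, hQ, hlen⟩ := edge_endpoints hh hPQ
  have hsplit : InterfaceSplit h D E Km Kp := by
    rcases hcfg with ⟨rfl, rfl, hde, rfl, rfl⟩ | ⟨rfl, rfl, rfl, rfl⟩
    · exact interfaceSplit_typeI hh hd he hde
    · exact interfaceSplit_typeII hh hd he
  exact sqrt_le_of_le_mul_inv hh (traceConst_pos hβm hβp).le
    (edgeSqBilN_le_traceConst_mul hβm hβp hh hsplit hn hj hP hQ hlen hnB)
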